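/- Let H be a real symmetric n×n matrix all of whose off-diagonal entries are nonpositive (a symmetric Z-matrix). Then for every real t ≥ 0, every entry of the matrix exponential exp(−t·H) is nonnegative. -/

import Mathlib

open Matrix

lemma pow_entry_nonneg_aux {n : ℕ} {A : Matrix (Fin n) (Fin n) ℝ}
    (h : ∀ i j, 0 ≤ A i j) (k : ℕ) : ∀ i j, 0 ≤ (A ^ k) i j := by
  induction k with
  | zero =>
    intro i j
    simp only [pow_zero, Matrix.one_apply]
    positivity
  | succ k ih =>
    intro i j
    rw [pow_succ, Matrix.mul_apply]
    exact Finset.sum_nonneg fun l _ => mul_nonneg (ih i l) (h l j)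

lemma exp_entry_nonneg_aux {n : ℕ} {A : Matrix (Fin n) (Fin n) ℝ}
    (h : ∀ i j, 0 ≤ A i j) : ∀ i j, 0 ≤ NormedSpace.exp A i j := by
  intro i j
  letI : SeminormedRing (Matrix (Fin n) (Fin n) ℝ) := Matrix.linftyOpSemiNormedRing
  letI : NormedRing (Matrix (Fin n) (Fin n) ℝ) := Matrix.linftyOpNormedRing
  letI : NormedAlgebra ℝ (Matrix (Fin n) (Fin n) ℝ) := Matrix.linftyOpNormedAlgebra
  have hs : Summable fun k : ℕ => ((k.factorial : ℝ)⁻¹) • A ^ k :=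
    NormedSpace.expSeries_summable' A
  have hs1 : Summable fun k : ℕ => (((k.factorial : ℝ)⁻¹) • A ^ k) i :=
    Pi.summable.1 hs i
  rw [NormedSpace.exp_eq_tsum ℝ]
  show 0 ≤ (∑' k : ℕ, ((k.factorial : ℝ)⁻¹) • A ^ k) i j
  erw [tsum_apply hs, tsum_apply hs1]
  refine tsum_nonneg fun k => ?_
  simp only [Matrix.smul_apply, smul_eq_mul]
  exact mul_nonneg (by positivity) (pow_entry_nonneg_aux h k i j)

theorem exp_neg_smul_nonneg_of_symmetric_Z_matrix
    {n : ℕ} (H : Matrix (Fin n) (Fin n) ℝ)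
    (hsymm : Hᵀ = H) (hoff : ∀ i j, i ≠ j → H i j ≤ 0) :
    ∀ t : ℝ, 0 ≤ t → ∀ i j, 0 ≤ NormedSpace.exp ((-t) • H) i j := by
  intro t ht i j
  set c : ℝ := ∑ k, |H k k| with hc
  have hcd : ∀ i, H i i ≤ c := by
    intro i
    calc H i i ≤ |H i i| := le_abs_self _
    _ ≤ c := Finset.single_le_sum (f := fun k => |H k k|) (fun k _ => abs_nonneg _)
        (Finset.mem_univ i)
  set A : Matrix (Fin n) (Fin n) ℝ := c • (1 : Matrix (Fin n) (Fin n) ℝ) - H with hA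
  have hApos : ∀ i j, 0 ≤ A i j := by
    intro i j
    by_cases hij : i = j
    · subst hij
      simp [hA, Matrix.one_apply, sub_nonneg, hcd i]
    · simp [hA, Matrix.one_apply, hij]
      exact hoff i j hij
  have hsplit : (-t) • H = t • A + (-(t * c)) • (1 : Matrix (Fin n) (Fin n) ℝ) := by
    ext i j
    simp [hA, Matrix.one_apply, mul_comm]
    ring_nf
    by_cases hij : i = j <;> simp [hij] <;> ring
  have hcomm : Commute (t • A) ((-(t * c)) • (1 : Matrix (Fin n) (Fin n) ℝ)) :=
    ((Commute.one_right A).smul_left t).smul_right (-(t * c))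
  have key := Matrix.exp_add_of_commute (t • A) ((-(t * c)) • 1) hcomm
  rw [hsplit, key,
    Matrix.smul_one_eq_diagonal, Matrix.exp_diagonal, Matrix.mul_diagonal]
  have htA : ∀ i j, 0 ≤ (t • A) i j := fun i j => by
    simpa [Matrix.smul_apply] using mul_nonneg ht (hApos i j)
  refine mul_nonneg (exp_entry_nonneg_aux htA i j) ?_
  rw [Pi.exp_def, ← Real.exp_eq_exp_ℝ]
  exact (Real.exp_pos _).le
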